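/- arXiv:2208.06574 — 6 statements merged into one kernel-verified Lean document; each statement's English description precedes it below -/
import Mathlib

section
/- If T = αI - K₁ + K₂ on a complex Hilbert space H, where α ≥ 0, K₁ and K₂ are positive compact operators with K₁K₂ = 0 and K₁ ≤ αI, then the null space of T is contained in the null space of K₂. -/
/-!
Since `K₁K₂ = 0` and both operators are self-adjoint, also `K₂K₁ = 0`, so applying `K₂` to
`T x = 0` gives `α K₂ x + K₂² x = 0`. Pairing with `x` yields `α ⟪x, K₂ x⟫ + ‖K₂ x‖² = 0`, a sum
of two nonnegative reals, hence `K₂ x = 0`.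
-/

open ContinuousLinearMap

open scoped ComplexOrder

namespace LinearMap

variable {𝕜 E : Type*} [RCLike 𝕜] [NormedAddCommGroup E] [InnerProductSpace 𝕜 E]

theorem IsSymmetric.comp_eq_zero_comm {A B : E →ₗ[𝕜] E} (hA : A.IsSymmetric)
    (hB : B.IsSymmetric) (h : A ∘ₗ B = 0) : B ∘ₗ A = 0 := by
  ext x
  refine ext_inner_right 𝕜 fun y => ?_
  rw [zero_apply, inner_zero_left, comp_apply, hB, hA, ← comp_apply, h, zero_apply,
    inner_zero_right]

theorem IsPositive.ker_smul_add_comp_self_le_ker {A : E →ₗ[𝕜] E} (hA : A.IsPositive)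
    {c : 𝕜} (hc : 0 ≤ c) : ker (c • A + A ∘ₗ A) ≤ ker A := by
  intro x hx
  have hsum : RCLike.re (c * inner 𝕜 x (A x)) + ‖A x‖ ^ 2 = 0 := by
    have := congrArg (fun y => RCLike.re (inner 𝕜 x y)) (mem_ker.mp hx)
    simpa [inner_add_right, inner_smul_right, ← hA.isSymmetric x (A x),
      inner_self_eq_norm_sq] using this
  have hre : 0 ≤ RCLike.re (c * inner 𝕜 x (A x)) :=
    (RCLike.nonneg_iff.mp (mul_nonneg hc (hA.inner_nonneg_right x))).1
  have hnorm : ‖A x‖ ^ 2 = 0 := by linarith [sq_nonneg ‖A x‖]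
  simpa using hnorm

end LinearMap

theorem stmt_0_general {H : Type*} [NormedAddCommGroup H] [InnerProductSpace ℂ H]
    (α : ℝ) (hα : 0 ≤ α) (K₁ K₂ T : H →L[ℂ] H)
    (hK₁pos : K₁.IsPositive) (hK₂pos : K₂.IsPositive)
    (hK₁K₂ : K₁ ∘L K₂ = 0)
    (hT : T = (α : ℂ) • (1 : H →L[ℂ] H) - K₁ + K₂) :
    LinearMap.ker (T : H →ₗ[ℂ] H) ≤ LinearMap.ker (K₂ : H →ₗ[ℂ] H) := by
  have hK₂K₁ : (K₂ : H →ₗ[ℂ] H) ∘ₗ (K₁ : H →ₗ[ℂ] H) = 0 :=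
    hK₁pos.isSymmetric.comp_eq_zero_comm hK₂pos.isSymmetric
      (by rw [← toLinearMap_comp, hK₁K₂, toLinearMap_zero])
  have hK₂T : (K₂ : H →ₗ[ℂ] H) ∘ₗ (T : H →ₗ[ℂ] H) =
      (α : ℂ) • (K₂ : H →ₗ[ℂ] H) + (K₂ : H →ₗ[ℂ] H) ∘ₗ (K₂ : H →ₗ[ℂ] H) := by
    ext x
    have hK₂K₁x : K₂ (K₁ x) = 0 := LinearMap.congr_fun hK₂K₁ x
    simp [hT, hK₂K₁x]
  intro x hx
  apply hK₂pos.toLinearMap.ker_smul_add_comp_self_le_ker (Complex.zero_le_real.mpr hα)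
  rw [← hK₂T, LinearMap.mem_ker, LinearMap.comp_apply, LinearMap.mem_ker.mp hx, map_zero]

/-- If `T = αI - K₁ + K₂` with `α ≥ 0`, `K₁, K₂` positive compact operators,
`K₁K₂ = 0` and `K₁ ≤ αI`, then `N(T) ⊆ N(K₂)`. -/
theorem stmt_0 {H : Type*} [NormedAddCommGroup H] [InnerProductSpace ℂ H]
    [CompleteSpace H] (α : ℝ) (hα : 0 ≤ α) (K₁ K₂ T : H →L[ℂ] H)
    (hK₁pos : K₁.IsPositive) (hK₂pos : K₂.IsPositive)
    (hK₁cpt : IsCompactOperator ⇑K₁) (hK₂cpt : IsCompactOperator ⇑K₂)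
    (hK₁K₂ : K₁ ∘L K₂ = 0)
    (hK₁le : ((α : ℂ) • (1 : H →L[ℂ] H) - K₁).IsPositive)
    (hT : T = (α : ℂ) • (1 : H →L[ℂ] H) - K₁ + K₂) :
    LinearMap.ker (T : H →ₗ[ℂ] H) ≤ LinearMap.ker (K₂ : H →ₗ[ℂ] H) :=
  stmt_0_general α hα K₁ K₂ T hK₁pos hK₂pos hK₁K₂ hT
end

section
/- If T = αI - K₁ + K₂ with α > 0, K₁, K₂ positive compact operators, K₁K₂ = 0 and K₁ ≤ αI, then every x in the null space of T satisfies K₁x = αx; consequently N(T) ⊆ R(K₁) and, if N(T) ≠ {0}, then ‖K₁‖ = α. -/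
/-!
A point of `N(T)` satisfies `(αI - K₁) x + K₂ x = 0`, a sum of values of two positive operators,
so `⟪(αI - K₁) x, x⟫ = 0`; writing the positive operator `αI - K₁` as `S* S` this is
`‖S x‖² = 0`, hence `K₁ x = α x`. Such an eigenvector gives `α ≤ ‖K₁‖`, and `0 ≤ K₁ ≤ αI` gives
the reverse inequality.
-/

open ContinuousLinearMap
open scoped InnerProductSpace ComplexOrder

namespace ContinuousLinearMap

theorem norm_le_opNorm_of_apply_eq_smul {𝕜 E : Type*} [NontriviallyNormedField 𝕜]
    [NormedAddCommGroup E] [NormedSpace 𝕜 E] {K : E →L[𝕜] E} {c : 𝕜} {x : E} (hx : x ≠ 0)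
    (h : K x = c • x) : ‖c‖ ≤ ‖K‖ := by
  have hle := K.le_opNorm x
  rw [h, norm_smul] at hle
  exact le_of_mul_le_mul_right hle (norm_pos_iff.2 hx)

variable {H : Type*} [NormedAddCommGroup H] [InnerProductSpace ℂ H] [CompleteSpace H]

theorem IsPositive.apply_eq_zero_of_inner_eq_zero {A : H →L[ℂ] H} (hA : A.IsPositive) {x : H}
    (h : ⟪A x, x⟫_ℂ = 0) : A x = 0 := by
  obtain ⟨S, rfl⟩ :=
    CStarAlgebra.nonneg_iff_eq_star_mul_self.mp ((nonneg_iff_isPositive A).mpr hA)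
  rw [mul_apply_eq_comp, star_eq_adjoint, adjoint_inner_left, inner_self_eq_zero] at h
  rw [mul_apply_eq_comp, h, map_zero]

theorem IsPositive.apply_eq_zero_of_add_apply_eq_zero {A B : H →L[ℂ] H} (hA : A.IsPositive)
    (hB : B.IsPositive) {x : H} (h : A x + B x = 0) : A x = 0 := by
  refine hA.apply_eq_zero_of_inner_eq_zero ?_
  have hsum : ⟪A x, x⟫_ℂ + ⟪B x, x⟫_ℂ = 0 := by rw [← inner_add_left, h, inner_zero_left]
  exact ((add_eq_zero_iff_of_nonneg (hA.inner_nonneg_left x) (hB.inner_nonneg_left x)).1 hsum).1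

theorem norm_le_of_nonneg_of_le_smul_one {K : H →L[ℂ] H} {r : ℝ} (hr : 0 ≤ r) (hK : 0 ≤ K)
    (h : K ≤ (r : ℂ) • 1) : ‖K‖ ≤ r :=
  (CStarAlgebra.norm_le_iff_le_algebraMap K hr hK).2 <| by
    simpa [Algebra.algebraMap_eq_smul_one] using h

end ContinuousLinearMap

theorem stmt_1_general {H : Type*} [NormedAddCommGroup H] [InnerProductSpace ℂ H]
    [CompleteSpace H] (α : ℝ) (hα : 0 < α) (K₁ K₂ T : H →L[ℂ] H)
    (hK₁pos : K₁.IsPositive) (hK₂pos : K₂.IsPositive)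
    (hK₁le : ((α : ℂ) • (1 : H →L[ℂ] H) - K₁).IsPositive)
    (hT : T = (α : ℂ) • (1 : H →L[ℂ] H) - K₁ + K₂) :
    (∀ x ∈ LinearMap.ker (T : H →ₗ[ℂ] H), K₁ x = (α : ℂ) • x) ∧
      LinearMap.ker (T : H →ₗ[ℂ] H) ≤ LinearMap.range (K₁ : H →ₗ[ℂ] H) ∧
      (LinearMap.ker (T : H →ₗ[ℂ] H) ≠ ⊥ → ‖K₁‖ = α) := by
  have hker : ∀ x ∈ LinearMap.ker (T : H →ₗ[ℂ] H), K₁ x = (α : ℂ) • x := by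
    intro x hx
    have hTx : ((α : ℂ) • (1 : H →L[ℂ] H) - K₁) x + K₂ x = 0 := by simpa [hT] using hx
    have h := hK₁le.apply_eq_zero_of_add_apply_eq_zero hK₂pos hTx
    rw [sub_apply, sub_eq_zero] at h
    simpa using h.symm
  refine ⟨hker, fun x hx => ⟨(α : ℂ)⁻¹ • x, ?_⟩, fun hne => ?_⟩
  · have hα' : (α : ℂ) ≠ 0 := by exact_mod_cast hα.ne'
    simp only [map_smul, coe_coe, hker x hx, smul_smul, inv_mul_cancel₀ hα', one_smul]
  · obtain ⟨x, hx, hx0⟩ := Submodule.exists_mem_ne_zero_of_ne_bot hne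
    refine le_antisymm ?_ ?_
    · exact norm_le_of_nonneg_of_le_smul_one hα.le ((nonneg_iff_isPositive K₁).2 hK₁pos) hK₁le
    · simpa [abs_of_pos hα] using norm_le_opNorm_of_apply_eq_smul hx0 (hker x hx)

/-- If `T = αI - K₁ + K₂` with `α > 0`, `K₁, K₂` positive compact, `K₁K₂ = 0`,
`K₁ ≤ αI`, then every `x ∈ N(T)` satisfies `K₁x = αx`; hence `N(T) ⊆ R(K₁)`
and if `N(T) ≠ {0}` then `‖K₁‖ = α`. -/
theorem stmt_1 {H : Type*} [NormedAddCommGroup H] [InnerProductSpace ℂ H]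
    [CompleteSpace H] (α : ℝ) (hα : 0 < α) (K₁ K₂ T : H →L[ℂ] H)
    (hK₁pos : K₁.IsPositive) (hK₂pos : K₂.IsPositive)
    (hK₁cpt : IsCompactOperator ⇑K₁) (hK₂cpt : IsCompactOperator ⇑K₂)
    (hK₁K₂ : K₁ ∘L K₂ = 0)
    (hK₁le : ((α : ℂ) • (1 : H →L[ℂ] H) - K₁).IsPositive)
    (hT : T = (α : ℂ) • (1 : H →L[ℂ] H) - K₁ + K₂) :
    (∀ x ∈ LinearMap.ker (T : H →ₗ[ℂ] H), K₁ x = (α : ℂ) • x) ∧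
      LinearMap.ker (T : H →ₗ[ℂ] H) ≤ LinearMap.range (K₁ : H →ₗ[ℂ] H) ∧
      (LinearMap.ker (T : H →ₗ[ℂ] H) ≠ ⊥ → ‖K₁‖ = α) :=
  stmt_1_general α hα K₁ K₂ T hK₁pos hK₂pos hK₁le hT
end

section
/- Let T = αI - K₁ + K₂ with α > 0, K₁, K₂ positive compact operators, K₁K₂ = 0 and K₁ ≤ αI. Then T fails to be injective if and only if ‖K₁‖ = α. -/
/-!
If `T z = 0` with `z ≠ 0`, then `K₁ z - K₂ z = α z`; pairing with `z` and using `K₂ ≥ 0` gives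
`α ‖z‖² ≤ Re ⟪K₁ z, z⟫ ≤ ‖K₁‖ ‖z‖²`, while `K₁ ≤ α` gives `‖K₁‖ ≤ α`.

Conversely, the norm of a nonzero positive operator lies in its spectrum, and a nonzero spectral
value of a compact operator is an eigenvalue (Fredholm alternative). An eigenvector of `K₁` for
`α` is killed by `K₂`, because `K₂ K₁ = (K₁ K₂)* = 0`, hence it lies in the kernel of `T`.
-/

namespace ContinuousLinearMap

variable {H : Type*} [NormedAddCommGroup H] [InnerProductSpace ℂ H]

lemma le_norm_of_sub_apply_eq_smul {K P : H →L[ℂ] H} (hP : P.IsPositive) {α : ℝ} {z : H}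
    (hz : z ≠ 0) (hKPz : K z - P z = (α : ℂ) • z) : α ≤ ‖K‖ := by
  have hz' : 0 < ‖z‖ ^ 2 := by positivity
  suffices α * ‖z‖ ^ 2 ≤ ‖K‖ * ‖z‖ ^ 2 from le_of_mul_le_mul_right this hz'
  calc α * ‖z‖ ^ 2 = RCLike.re (inner ℂ (K z) z) - RCLike.re (inner ℂ (P z) z) := by
        rw [← map_sub, ← inner_sub_left, hKPz, inner_smul_left,
          inner_self_eq_norm_sq_to_K (𝕜 := ℂ)]
        simp [← Complex.ofReal_pow]
    _ ≤ ‖K z‖ * ‖z‖ := by linarith [hP.re_inner_nonneg_left z, re_inner_le_norm (𝕜 := ℂ) (K z) z]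
    _ ≤ ‖K‖ * ‖z‖ ^ 2 := by nlinarith [K.le_opNorm z, norm_nonneg z]

variable [CompleteSpace H]

lemma IsPositive.norm_le_of_isPositive_smul_one_sub {K : H →L[ℂ] H} (hK : K.IsPositive) {α : ℝ}
    (hα : 0 ≤ α) (hKα : ((α : ℂ) • (1 : H →L[ℂ] H) - K).IsPositive) : ‖K‖ ≤ α := by
  rw [← nonneg_iff_isPositive] at hK hKα
  rw [CStarAlgebra.norm_le_iff_le_algebraMap K hα, Algebra.algebraMap_eq_smul_one,
    ← sub_nonneg]
  simpa [Complex.coe_smul] using hKα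

lemma IsPositive.hasEigenvalue_norm_of_isCompactOperator {K : H →L[ℂ] H} (hK : K.IsPositive)
    (hKc : IsCompactOperator K) (hK0 : K ≠ 0) :
    Module.End.HasEigenvalue (K : Module.End ℂ H) (‖K‖ : ℂ) := by
  have : Nontrivial H := not_subsingleton_iff_nontrivial.mp fun _ ↦ hK0 (Subsingleton.elim _ _)
  rw [hKc.hasEigenvalue_iff_mem_spectrum (by exact_mod_cast norm_ne_zero_iff.mpr hK0)]
  exact spectrum.algebraMap_mem ℂ
    (CStarAlgebra.norm_mem_spectrum_of_nonneg ((nonneg_iff_isPositive K).mpr hK))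

end ContinuousLinearMap

open ContinuousLinearMap

theorem stmt_2_general {H : Type*} [NormedAddCommGroup H] [InnerProductSpace ℂ H]
    [CompleteSpace H] (α : ℝ) (hα : 0 < α) (K₁ K₂ T : H →L[ℂ] H)
    (hK₁pos : K₁.IsPositive) (hK₂pos : K₂.IsPositive)
    (hK₁cpt : IsCompactOperator ⇑K₁)
    (hK₁K₂ : K₁ ∘L K₂ = 0)
    (hK₁le : ((α : ℂ) • (1 : H →L[ℂ] H) - K₁).IsPositive)
    (hT : T = (α : ℂ) • (1 : H →L[ℂ] H) - K₁ + K₂) :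
    ¬ Function.Injective T ↔ ‖K₁‖ = α := by
  have hK₁_norm_le := hK₁pos.norm_le_of_isPositive_smul_one_sub hα.le hK₁le
  rw [injective_iff_map_eq_zero]
  push Not
  constructor
  · rintro ⟨z, hTz, hz⟩
    refine le_antisymm hK₁_norm_le (le_norm_of_sub_apply_eq_smul hK₂pos hz ?_)
    simp only [hT, add_apply, sub_apply, smul_apply, one_apply_eq_self] at hTz
    linear_combination (norm := module) -hTz
  · intro hnorm
    have hK₁0 : K₁ ≠ 0 := by
      rintro rfl
      exact hα.ne (by simpa using hnorm)
    obtain ⟨x, hx⟩ :=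
      (hK₁pos.hasEigenvalue_norm_of_isCompactOperator hK₁cpt hK₁0).exists_hasEigenvector
    have hK₁x : K₁ x = (α : ℂ) • x := hnorm ▸ hx.apply_eq_smul
    have hK₂K₁ : K₂ * K₁ = 0 := by
      simpa [star_mul, hK₁pos.isSelfAdjoint.star_eq, hK₂pos.isSelfAdjoint.star_eq]
        using congrArg star (show K₁ * K₂ = 0 from hK₁K₂)
    have hK₂x : K₂ x = 0 := by simpa [hK₁x, hα.ne'] using congrArg (· x) hK₂K₁
    exact ⟨x, by simp [hT, hK₁x, hK₂x], hx.2⟩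

/-- `T = αI - K₁ + K₂` (α > 0, K₁,K₂ positive compact, K₁K₂ = 0, K₁ ≤ αI)
fails to be injective iff `‖K₁‖ = α`. -/
theorem stmt_2 {H : Type*} [NormedAddCommGroup H] [InnerProductSpace ℂ H]
    [CompleteSpace H] (α : ℝ) (hα : 0 < α) (K₁ K₂ T : H →L[ℂ] H)
    (hK₁pos : K₁.IsPositive) (hK₂pos : K₂.IsPositive)
    (hK₁cpt : IsCompactOperator ⇑K₁) (hK₂cpt : IsCompactOperator ⇑K₂)
    (hK₁K₂ : K₁ ∘L K₂ = 0)
    (hK₁le : ((α : ℂ) • (1 : H →L[ℂ] H) - K₁).IsPositive)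
    (hT : T = (α : ℂ) • (1 : H →L[ℂ] H) - K₁ + K₂) :
    ¬ Function.Injective T ↔ ‖K₁‖ = α :=
  stmt_2_general α hα K₁ K₂ T hK₁pos hK₂pos hK₁cpt hK₁K₂ hK₁le hT
end

section
/- Let T be a quasinormal bounded operator on a complex Hilbert space with polar decomposition T = W|T|. If λ is an eigenvalue of |T|, then the eigenspace N(|T| - λI) reduces W, and hence reduces T. -/
open ContinuousLinearMap

/-!
Quasinormality says that `T` commutes with `|T|² = T*T`, hence with its positive square root `|T|`.
Then `D = W|T| - |T|W` satisfies `D|T| = T|T| - |T|T = 0` and vanishes on `N(|T|) ⊆ N(W)`; so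
`D*` maps into `N(|T|) ⊆ N(D)`, whence `‖D*x‖² = ⟪x, DD*x⟫ = 0` and `W` commutes with `|T|`.
Operators commuting with `|T|`, here `W`, `W*`, `T` and `T*`, preserve its eigenspaces.
-/

theorem Commute.of_mul_self_left {A : Type*} [PartialOrder A] [NonUnitalRing A]
    [TopologicalSpace A] [StarRing A] [Module ℝ A] [SMulCommClass ℝ A A] [IsScalarTower ℝ A A]
    [StarOrderedRing A] [NonUnitalContinuousFunctionalCalculus ℝ A IsSelfAdjoint]
    [NonnegSpectrumClass ℝ A] [IsTopologicalRing A] [T2Space A]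
    {a b : A} (ha : 0 ≤ a) (h : Commute (a * a) b) : Commute a b :=
  CFC.sqrt_mul_self a ha ▸ h.cfcₙ_nnreal NNReal.sqrt

theorem Commute.mem_ker_sub_smul_one {𝕜 M : Type*} [CommRing 𝕜] [TopologicalSpace M]
    [AddCommGroup M] [IsTopologicalAddGroup M] [Module 𝕜 M] [ContinuousConstSMul 𝕜 M]
    {R S : M →L[𝕜] M} (h : Commute R S) (l : 𝕜) {x : M}
    (hx : x ∈ LinearMap.ker ((R - l • (1 : M →L[𝕜] M) : M →L[𝕜] M) : M →ₗ[𝕜] M)) :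
    S x ∈ LinearMap.ker ((R - l • (1 : M →L[𝕜] M) : M →L[𝕜] M) : M →ₗ[𝕜] M) := by
  have hS : Commute (R - l • 1) S := h.sub_left ((Commute.one_left S).smul_left l)
  simp only [LinearMap.mem_ker, coe_coe] at hx ⊢
  rw [← mul_apply_eq_comp, hS.eq, mul_apply_eq_comp, hx, map_zero]

namespace ContinuousLinearMap

variable {𝕜 H : Type*} [RCLike 𝕜] [NormedAddCommGroup H] [InnerProductSpace 𝕜 H] [CompleteSpace H]

theorem eq_zero_of_mul_eq_zero_of_ker_le {D R : H →L[𝕜] H} (hR : IsSelfAdjoint R)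
    (hDR : D * R = 0) (hker : LinearMap.ker (R : H →ₗ[𝕜] H) ≤ LinearMap.ker (D : H →ₗ[𝕜] H)) :
    D = 0 := by
  have hRD : R * adjoint D = 0 := by
    rw [← hR.adjoint_eq, mul_def, ← adjoint_comp, ← mul_def, hDR, map_zero]
  suffices adjoint D = 0 by simpa using congrArg adjoint this
  ext x
  have hDDx : D (adjoint D x) = 0 := hker (DFunLike.congr_fun hRD x)
  rw [zero_apply, ← inner_self_eq_zero (𝕜 := 𝕜), adjoint_inner_left, hDDx, inner_zero_right]

theorem commute_of_commute_mul_of_ker_le {W R : H →L[𝕜] H} (hR : IsSelfAdjoint R)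
    (hker : LinearMap.ker (R : H →ₗ[𝕜] H) ≤ LinearMap.ker (W : H →ₗ[𝕜] H))
    (hWR : Commute (W * R) R) : Commute W R := by
  refine sub_eq_zero.mp (eq_zero_of_mul_eq_zero_of_ker_le hR ?_ fun y hy => ?_)
  · rw [sub_mul, mul_assoc R, hWR.eq, sub_self]
  · have hWy : W y = 0 := hker hy
    have hRy : R y = 0 := hy
    simp only [LinearMap.mem_ker, coe_coe, sub_apply, mul_apply_eq_comp, hRy, hWy, map_zero,
      sub_zero]

end ContinuousLinearMap

theorem stmt_8_general {H : Type*} [NormedAddCommGroup H] [InnerProductSpace ℂ H]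
    [CompleteSpace H] (T W R : H →L[ℂ] H)
    (hquasi : T ∘L (adjoint T ∘L T) = (adjoint T ∘L T) ∘L T)
    (hRpos : R.IsPositive) (hR2 : R ∘L R = adjoint T ∘L T)
    (hpolar : T = W ∘L R)
    (hkerW : LinearMap.ker (W : H →ₗ[ℂ] H) = LinearMap.ker (T : H →ₗ[ℂ] H))
    (l : ℂ) :
    ∀ x ∈ LinearMap.ker ((R - l • (1 : H →L[ℂ] H) : H →L[ℂ] H) : H →ₗ[ℂ] H),
      W x ∈ LinearMap.ker ((R - l • (1 : H →L[ℂ] H) : H →L[ℂ] H) : H →ₗ[ℂ] H) ∧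
      adjoint W x ∈ LinearMap.ker ((R - l • (1 : H →L[ℂ] H) : H →L[ℂ] H) : H →ₗ[ℂ] H) ∧
      T x ∈ LinearMap.ker ((R - l • (1 : H →L[ℂ] H) : H →L[ℂ] H) : H →ₗ[ℂ] H) ∧
      adjoint T x ∈ LinearMap.ker ((R - l • (1 : H →L[ℂ] H) : H →L[ℂ] H) : H →ₗ[ℂ] H) := by
  intro x hx
  have hRsa : IsSelfAdjoint R := hRpos.isSelfAdjoint
  have hRT : Commute R T :=
    Commute.of_mul_self_left ((nonneg_iff_isPositive R).2 hRpos)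
      (by rw [mul_def, hR2]; exact hquasi.symm)
  have hkerR : LinearMap.ker (R : H →ₗ[ℂ] H) ≤ LinearMap.ker (W : H →ₗ[ℂ] H) :=
    hkerW ▸ fun y (hy : R y = 0) => show T y = 0 by rw [hpolar, comp_apply, hy, map_zero]
  have hRW : Commute R W :=
    (commute_of_commute_mul_of_ker_le hRsa hkerR
      (show Commute (W ∘L R) R from hpolar ▸ hRT.symm)).symm
  have hadj {S : H →L[ℂ] H} (h : Commute R S) : Commute R (adjoint S) := by
    simpa only [hRsa.star_eq, star_eq_adjoint] using h.star_star
  exact ⟨hRW.mem_ker_sub_smul_one l hx, (hadj hRW).mem_ker_sub_smul_one l hx,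
    hRT.mem_ker_sub_smul_one l hx, (hadj hRT).mem_ker_sub_smul_one l hx⟩

/-- If `T` is quasinormal with polar decomposition `T = W|T|` and `λ` is an
eigenvalue of `|T|`, then `N(|T| - λI)` reduces `W` and hence reduces `T`. -/
theorem stmt_8 {H : Type*} [NormedAddCommGroup H] [InnerProductSpace ℂ H]
    [CompleteSpace H] (T W R : H →L[ℂ] H)
    (hquasi : T ∘L (adjoint T ∘L T) = (adjoint T ∘L T) ∘L T)
    (hRpos : R.IsPositive) (hR2 : R ∘L R = adjoint T ∘L T)
    (hpolar : T = W ∘L R)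
    (hWiso : ∀ x ∈ (LinearMap.ker (T : H →ₗ[ℂ] H) : Submodule ℂ H)ᗮ, ‖W x‖ = ‖x‖)
    (hkerW : LinearMap.ker (W : H →ₗ[ℂ] H) = LinearMap.ker (T : H →ₗ[ℂ] H))
    (l : ℂ) (hl : LinearMap.ker ((R - l • (1 : H →L[ℂ] H) : H →L[ℂ] H) : H →ₗ[ℂ] H) ≠ ⊥) :
    ∀ x ∈ LinearMap.ker ((R - l • (1 : H →L[ℂ] H) : H →L[ℂ] H) : H →ₗ[ℂ] H),
      W x ∈ LinearMap.ker ((R - l • (1 : H →L[ℂ] H) : H →L[ℂ] H) : H →ₗ[ℂ] H) ∧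
      adjoint W x ∈ LinearMap.ker ((R - l • (1 : H →L[ℂ] H) : H →L[ℂ] H) : H →ₗ[ℂ] H) ∧
      T x ∈ LinearMap.ker ((R - l • (1 : H →L[ℂ] H) : H →L[ℂ] H) : H →ₗ[ℂ] H) ∧
      adjoint T x ∈ LinearMap.ker ((R - l • (1 : H →L[ℂ] H) : H →L[ℂ] H) : H →ₗ[ℂ] H) :=
  stmt_8_general T W R hquasi hRpos hR2 hpolar hkerW l
end

section
/- Let T be a quasinormal bounded operator with polar decomposition T = W|T|, and suppose |T| = αI - K₁ + K₂ where α ≥ 0, K₁, K₂ are positive compact operators with K₁K₂ = 0 and K₁ ≤ αI. Then W commutes with both K₁ and K₂. -/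
/-!
Quasinormality says that `T` commutes with `T*T = R²`, hence with `R = √(R²)`. Since `T = WR`
and `ker T ⊆ ker W`, the commutator `WR - RW` kills both `range R` and `ker R`, so `W` commutes
with `R` and therefore with `αI - R = K₁ - K₂`. As `K₁K₂ = 0`, the operators `K₁` and `K₂` are
the positive and negative parts of `K₁ - K₂`, i.e. continuous functions of it, so they commute
with `W` as well.
-/

open ContinuousLinearMap

theorem Commute.of_mul_self_left_s9 {A : Type*} [NonUnitalCStarAlgebra A] [PartialOrder A]
    [StarOrderedRing A] {r x : A} (hr : 0 ≤ r) (h : Commute (r * r) x) : Commute r x :=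
  CFC.sqrt_mul_self r hr ▸ h.cfcₙ_nnreal _

theorem Commute.of_sub_of_mul_eq_zero {A : Type*} [NonUnitalCStarAlgebra A] [PartialOrder A]
    [StarOrderedRing A] {b c x : A} (hb : 0 ≤ b) (hc : 0 ≤ c) (hbc : b * c = 0)
    (hx : Commute (b - c) x) : Commute b x ∧ Commute c x := by
  obtain ⟨hpos, hneg⟩ := CFC.posPart_negPart_unique rfl hbc hb hc
  exact ⟨hpos ▸ hx.cfcₙ_real _, hneg ▸ hx.cfcₙ_real _⟩

section HilbertSpace

variable {H : Type*} [NormedAddCommGroup H] [InnerProductSpace ℂ H] [CompleteSpace H]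

-- `D R = 0` gives `R D* = 0`, so `range D* ⊆ ker R ⊆ ker D` and `D D* = 0`.
theorem ContinuousLinearMap.eq_zero_of_comp_eq_zero_of_ker_le {D R : H →L[ℂ] H}
    (hR : IsSelfAdjoint R) (hDR : D ∘L R = 0)
    (hker : LinearMap.ker (R : H →ₗ[ℂ] H) ≤ LinearMap.ker (D : H →ₗ[ℂ] H)) : D = 0 := by
  have hRD : R ∘L adjoint D = 0 := by
    simpa only [adjoint_comp, hR.adjoint_eq, map_zero] using congrArg adjoint hDR
  exact (CStarRing.mul_star_self_eq_zero_iff D).mp (ext fun x => hker congr($hRD x))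

theorem ContinuousLinearMap.commute_of_eq_comp_of_commute {T W R : H →L[ℂ] H}
    (hR : IsSelfAdjoint R) (hTWR : T = W ∘L R) (hRT : Commute R T)
    (hker : LinearMap.ker (T : H →ₗ[ℂ] H) ≤ LinearMap.ker (W : H →ₗ[ℂ] H)) : Commute W R := by
  refine sub_eq_zero.mp (eq_zero_of_comp_eq_zero_of_ker_le hR ?_ fun x hx => ?_)
  · calc (W * R - R * W) ∘L R = T * R - R * T := by
          rw [hTWR]; simp only [mul_def, sub_comp, comp_assoc]
      _ = 0 := sub_eq_zero.mpr hRT.eq.symm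
  · have hRx : R x = 0 := hx
    have hWx : W x = 0 := hker (by simp [hTWR, hRx])
    simp [hRx, hWx]

end HilbertSpace

theorem stmt_9_general {H : Type*} [NormedAddCommGroup H] [InnerProductSpace ℂ H]
    [CompleteSpace H] (T W R K₁ K₂ : H →L[ℂ] H) (α : ℝ)
    (hquasi : T ∘L (adjoint T ∘L T) = (adjoint T ∘L T) ∘L T)
    (hRpos : R.IsPositive) (hR2 : R ∘L R = adjoint T ∘L T)
    (hpolar : T = W ∘L R)
    (hkerW : LinearMap.ker (W : H →ₗ[ℂ] H) = LinearMap.ker (T : H →ₗ[ℂ] H))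
    (hK₁pos : K₁.IsPositive) (hK₂pos : K₂.IsPositive)
    (hK₁K₂ : K₁ ∘L K₂ = 0)
    (hR : R = (α : ℂ) • (1 : H →L[ℂ] H) - K₁ + K₂) :
    W ∘L K₁ = K₁ ∘L W ∧ W ∘L K₂ = K₂ ∘L W := by
  have hRT : Commute R T := by
    rw [← hR2] at hquasi
    exact .of_mul_self_left ((nonneg_iff_isPositive R).mpr hRpos) hquasi.symm
  have hWR : Commute W R := commute_of_eq_comp_of_commute hRpos.isSelfAdjoint hpolar hRT hkerW.ge
  have hWK : Commute (K₁ - K₂) W := by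
    have hK : K₁ - K₂ = (α : ℂ) • (1 : H →L[ℂ] H) - R := by rw [hR]; abel
    exact hK ▸ (((Commute.one_right W).smul_right _).sub_right hWR).symm
  obtain ⟨hK₁, hK₂⟩ := hWK.of_sub_of_mul_eq_zero ((nonneg_iff_isPositive K₁).mpr hK₁pos)
    ((nonneg_iff_isPositive K₂).mpr hK₂pos) hK₁K₂
  exact ⟨hK₁.eq.symm, hK₂.eq.symm⟩

/-- If `T` is quasinormal with polar decomposition `T = W|T|` and
`|T| = αI - K₁ + K₂` (α ≥ 0, K₁,K₂ positive compact, K₁K₂ = 0, K₁ ≤ αI),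
then `W` commutes with both `K₁` and `K₂`. -/
theorem stmt_9 {H : Type*} [NormedAddCommGroup H] [InnerProductSpace ℂ H]
    [CompleteSpace H] (T W R K₁ K₂ : H →L[ℂ] H) (α : ℝ) (hα : 0 ≤ α)
    (hquasi : T ∘L (adjoint T ∘L T) = (adjoint T ∘L T) ∘L T)
    (hRpos : R.IsPositive) (hR2 : R ∘L R = adjoint T ∘L T)
    (hpolar : T = W ∘L R)
    (hWiso : ∀ x ∈ (LinearMap.ker (T : H →ₗ[ℂ] H) : Submodule ℂ H)ᗮ, ‖W x‖ = ‖x‖)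
    (hkerW : LinearMap.ker (W : H →ₗ[ℂ] H) = LinearMap.ker (T : H →ₗ[ℂ] H))
    (hK₁pos : K₁.IsPositive) (hK₂pos : K₂.IsPositive)
    (hK₁cpt : IsCompactOperator ⇑K₁) (hK₂cpt : IsCompactOperator ⇑K₂)
    (hK₁K₂ : K₁ ∘L K₂ = 0)
    (hK₁le : ((α : ℂ) • (1 : H →L[ℂ] H) - K₁).IsPositive)
    (hR : R = (α : ℂ) • (1 : H →L[ℂ] H) - K₁ + K₂) :
    W ∘L K₁ = K₁ ∘L W ∧ W ∘L K₂ = K₂ ∘L W :=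
  stmt_9_general T W R K₁ K₂ α hquasi hRpos hR2 hpolar hkerW hK₁pos hK₂pos hK₁K₂ hR
end

section
/- Let T = [[cV₁, A],[0, B]] be a block operator on H = H₁ ⊕ H₂ with c = ‖T‖, V₁ an isometry on H₁, satisfying V₁*A = 0 and A*A + B*B = D for a positive D ∈ B(H₂). If T is hyponormal, then BB* ≤ D. -/
/-!
Hyponormality says `‖T* z‖ ≤ ‖T z‖` for every `z`. Test it on `z = (0, y)`: since `T` is
block upper triangular, `T z = (A y, B y)` and `T* z = (0, B* y)`, so
`‖B* y‖² ≤ ‖A y‖² + ‖B y‖² = re ⟪D y, y⟫`, which is `B B* ≤ D`.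
-/

open ContinuousLinearMap

namespace ContinuousLinearMap

variable {𝕜 E F : Type*} [RCLike 𝕜]
  [NormedAddCommGroup E] [InnerProductSpace 𝕜 E] [CompleteSpace E]
  [NormedAddCommGroup F] [InnerProductSpace 𝕜 F] [CompleteSpace F]

theorem re_inner_adjoint_comp_self_apply (R : E →L[𝕜] F) (x : E) :
    RCLike.re (inner 𝕜 ((adjoint R ∘L R) x) x) = ‖R x‖ ^ 2 := by
  rw [comp_apply, adjoint_inner_left, inner_self_eq_norm_sq]

theorem isPositive_sub_adjoint_comp_self_iff {P : E →L[𝕜] E} (hP : IsSelfAdjoint P)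
    (R : E →L[𝕜] F) :
    (P - adjoint R ∘L R).IsPositive ↔ ∀ x, ‖R x‖ ^ 2 ≤ RCLike.re (inner 𝕜 (P x) x) := by
  have hPR : IsSelfAdjoint (P - adjoint R ∘L R) :=
    hP.sub (isPositive_adjoint_comp_self R).isSelfAdjoint
  simp only [isPositive_def', hPR, true_and, reApplyInnerSelf_apply, sub_apply, inner_sub_left,
    map_sub, re_inner_adjoint_comp_self_apply, sub_nonneg]

theorem norm_adjoint_apply_le_of_isPositive {T : E →L[𝕜] E}
    (hT : (adjoint T ∘L T - T ∘L adjoint T).IsPositive) (x : E) :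
    ‖adjoint T x‖ ≤ ‖T x‖ := by
  have hT' : (adjoint T ∘L T - adjoint (adjoint T) ∘L adjoint T).IsPositive := by
    rwa [adjoint_adjoint]
  have h := (isPositive_sub_adjoint_comp_self_iff
    (isPositive_adjoint_comp_self T).isSelfAdjoint (adjoint T)).1 hT' x
  rw [re_inner_adjoint_comp_self_apply] at h
  exact (pow_le_pow_iff_left₀ (norm_nonneg _) (norm_nonneg _) two_ne_zero).1 h

end ContinuousLinearMap

section BlockOperator

variable {𝕜 H₁ H₂ : Type*} [RCLike 𝕜]
  [NormedAddCommGroup H₁] [InnerProductSpace 𝕜 H₁]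
  [NormedAddCommGroup H₂] [InnerProductSpace 𝕜 H₂]

def IsBlockUpperTriangular (T : WithLp 2 (H₁ × H₂) →L[𝕜] WithLp 2 (H₁ × H₂))
    (P : H₁ →L[𝕜] H₁) (A : H₂ →L[𝕜] H₁) (B : H₂ →L[𝕜] H₂) : Prop :=
  ∀ x y, T (WithLp.toLp 2 (x, y)) = WithLp.toLp 2 (P x + A y, B y)

namespace IsBlockUpperTriangular

variable {T : WithLp 2 (H₁ × H₂) →L[𝕜] WithLp 2 (H₁ × H₂)}
  {P : H₁ →L[𝕜] H₁} {A : H₂ →L[𝕜] H₁} {B : H₂ →L[𝕜] H₂}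

theorem norm_sq_apply_toLp_zero (hT : IsBlockUpperTriangular T P A B) (y : H₂) :
    ‖T (WithLp.toLp 2 (0, y))‖ ^ 2 = ‖A y‖ ^ 2 + ‖B y‖ ^ 2 := by
  rw [hT, WithLp.prod_norm_sq_eq_of_L2, map_zero, zero_add]
  rfl

theorem adjoint_apply_toLp_zero [CompleteSpace H₁] [CompleteSpace H₂]
    (hT : IsBlockUpperTriangular T P A B) (y : H₂) :
    adjoint T (WithLp.toLp 2 (0, y)) = WithLp.toLp 2 (0, adjoint B y) := by
  refine ext_inner_right 𝕜 fun z => ?_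
  obtain ⟨⟨x, y'⟩⟩ := z
  rw [adjoint_inner_left, hT]
  simp only [WithLp.prod_inner_apply, inner_zero_left, zero_add, adjoint_inner_left]

end IsBlockUpperTriangular

end BlockOperator

theorem stmt_14_general {H₁ H₂ : Type*}
    [NormedAddCommGroup H₁] [InnerProductSpace ℂ H₁] [CompleteSpace H₁]
    [NormedAddCommGroup H₂] [InnerProductSpace ℂ H₂] [CompleteSpace H₂]
    (T : WithLp 2 (H₁ × H₂) →L[ℂ] WithLp 2 (H₁ × H₂)) (c : ℝ)
    (V₁ : H₁ →L[ℂ] H₁) (A : H₂ →L[ℂ] H₁) (B : H₂ →L[ℂ] H₂) (D : H₂ →L[ℂ] H₂)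
    (hT : ∀ (x : H₁) (y : H₂),
      T ((WithLp.equiv 2 (H₁ × H₂)).symm (x, y)) =
        (WithLp.equiv 2 (H₁ × H₂)).symm ((c : ℂ) • V₁ x + A y, B y))
    (hABD : adjoint A ∘L A + adjoint B ∘L B = D)
    (hhypo : (adjoint T ∘L T - T ∘L adjoint T).IsPositive) :
    (D - B ∘L adjoint B).IsPositive := by
  have hTri : IsBlockUpperTriangular T ((c : ℂ) • V₁) A B := hT
  subst hABD
  have hD : IsSelfAdjoint (adjoint A ∘L A + adjoint B ∘L B) :=
    ((isPositive_adjoint_comp_self A).add (isPositive_adjoint_comp_self B)).isSelfAdjoint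
  have hpos := (isPositive_sub_adjoint_comp_self_iff hD (adjoint B)).2 fun y => ?_
  · rwa [adjoint_adjoint] at hpos
  calc ‖adjoint B y‖ ^ 2 = ‖adjoint T (WithLp.toLp 2 (0, y))‖ ^ 2 := by
        rw [hTri.adjoint_apply_toLp_zero, WithLp.prod_norm_sq_eq_of_L2]
        simp
    _ ≤ ‖T (WithLp.toLp 2 (0, y))‖ ^ 2 :=
        pow_le_pow_left₀ (norm_nonneg _) (norm_adjoint_apply_le_of_isPositive hhypo _) 2
    _ = ‖A y‖ ^ 2 + ‖B y‖ ^ 2 := hTri.norm_sq_apply_toLp_zero y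
    _ = RCLike.re (inner ℂ ((adjoint A ∘L A + adjoint B ∘L B) y) y) := by
        rw [add_apply, inner_add_left, map_add, re_inner_adjoint_comp_self_apply,
          re_inner_adjoint_comp_self_apply]

/-- Let `T = [[cV₁, A],[0, B]]` on `H = H₁ ⊕ H₂` with `c = ‖T‖`, `V₁` an
isometry, `V₁*A = 0` and `A*A + B*B = D` for a positive `D`. If `T` is
hyponormal, then `BB* ≤ D`. -/
theorem stmt_14 {H₁ H₂ : Type*}
    [NormedAddCommGroup H₁] [InnerProductSpace ℂ H₁] [CompleteSpace H₁]
    [NormedAddCommGroup H₂] [InnerProductSpace ℂ H₂] [CompleteSpace H₂]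
    (T : WithLp 2 (H₁ × H₂) →L[ℂ] WithLp 2 (H₁ × H₂)) (c : ℝ) (hc : c = ‖T‖)
    (hcpos : 0 < c)
    (V₁ : H₁ →L[ℂ] H₁) (A : H₂ →L[ℂ] H₁) (B : H₂ →L[ℂ] H₂) (D : H₂ →L[ℂ] H₂)
    (hV₁ : ∀ x, ‖V₁ x‖ = ‖x‖) (hD : D.IsPositive)
    (hT : ∀ (x : H₁) (y : H₂),
      T ((WithLp.equiv 2 (H₁ × H₂)).symm (x, y)) =
        (WithLp.equiv 2 (H₁ × H₂)).symm ((c : ℂ) • V₁ x + A y, B y))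
    (hVA : adjoint V₁ ∘L A = 0)
    (hABD : adjoint A ∘L A + adjoint B ∘L B = D)
    (hhypo : (adjoint T ∘L T - T ∘L adjoint T).IsPositive) :
    (D - B ∘L adjoint B).IsPositive :=
  stmt_14_general T c V₁ A B D hT hABD hhypo
end
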